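/- arXiv:math/0611184 — 3 statements merged into one kernel-verified Lean document; each statement's English description precedes it below -/
import Mathlib

section
/- Fix γ ≠ 0, V = ℂ^n. Let R, R̃ ∈ End(V ⊗ V) be constant matrices, b, q : ℂ^n → GL(n,ℂ), and define A(λ) = b(λ)_1^{-1} b(λ)_2^{-1} R b(λ)_1 b(λ)_2, B(λ) = Σ_i e_{ii} ⊗ b(λ)^{-1} b(λ+γε_i), C(λ) = Σ_i (b(λ)^{-1} b(λ+γε_i)) ⊗ e_{ii}, and D(λ) = D_{12}(λ) = q_1(λ+h_2)^{-1} q_2(λ)^{-1} R̃ q_1(λ) q_2(λ+h_1), where X_1(λ+h_2) := Σ_i X(λ+γε_i) ⊗ e_{ii} and X_2(λ+h_1) := Σ_i e_{ii} ⊗ X(λ+γε_i). Suppose Q ∈ End(V) is a constant matrix satisfying R Q_1 Q_2 = Q_2 Q_1 R̃. Then K(λ) := b(λ)^{-1} Q q(λ) satisfies the semi-dynamical reflection equation A(λ) K_1(λ) B(λ) K_2(λ+h_1) = K_2(λ) C(λ) K_1(λ+h_2) D(λ), where K_2(λ+h_1) := Σ_i e_{ii} ⊗ K(λ+γε_i)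 and K_1(λ+h_2) := Σ_i K(λ+γε_i) ⊗ e_{ii}. -/
open Matrix Kronecker BigOperators

/-- `γ ε_i` : the shift vector adding `γ` to the `i`-th dynamical coordinate. -/
def eps (n : ℕ) (γ : ℂ) (i : Fin n) : Fin n → ℂ := fun j => if j = i then γ else 0

/-- `e_{ii}` diagonal matrix unit. -/
def E {n : ℕ} (i : Fin n) : Matrix (Fin n) (Fin n) ℂ := Matrix.single i i 1

/-- Space-1 dynamical shift `X₁(λ+h₂) = ∑ᵢ X(λ+γεᵢ) ⊗ e_{ii}`. -/
noncomputable def sh1 {n : ℕ} (γ : ℂ) (X : (Fin n → ℂ) → Matrix (Fin n) (Fin n) ℂ)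
    (l : Fin n → ℂ) : Matrix (Fin n × Fin n) (Fin n × Fin n) ℂ :=
  ∑ i : Fin n, X (l + eps n γ i) ⊗ₖ E i

/-- Space-2 dynamical shift `X₂(λ+h₁) = ∑ᵢ e_{ii} ⊗ X(λ+γεᵢ)`. -/
noncomputable def sh2 {n : ℕ} (γ : ℂ) (X : (Fin n → ℂ) → Matrix (Fin n) (Fin n) ℂ)
    (l : Fin n → ℂ) : Matrix (Fin n × Fin n) (Fin n × Fin n) ℂ :=
  ∑ i : Fin n, E i ⊗ₖ X (l + eps n γ i)

lemma E_mul_E {n : ℕ} (i j : Fin n) : E i * E j = if i = j then E i else 0 := by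
  by_cases h : i = j
  · subst h; simp [E, Matrix.single_mul_single_same]
  · simp [E, Matrix.single_mul_single_of_ne, h, if_neg h]

lemma sum_E {n : ℕ} : (∑ i : Fin n, E i) = 1 := by
  ext a c
  simp only [Matrix.sum_apply, E, Matrix.single, Matrix.of_apply, Matrix.one_apply]
  by_cases h : a = c
  · subst h; simp
  · rw [if_neg h, Finset.sum_eq_zero]
    intro i _
    rw [if_neg]
    rintro ⟨rfl, rfl⟩
    exact h rfl

lemma h1 {n : ℕ} (X Y : Fin n → Matrix (Fin n) (Fin n) ℂ) :
    (∑ i : Fin n, E i ⊗ₖ X i) * (∑ j : Fin n, E j ⊗ₖ Y j)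
      = ∑ i : Fin n, E i ⊗ₖ (X i * Y i) := by
  rw [Finset.sum_mul_sum]
  have h : ∀ i j : Fin n, (E i ⊗ₖ X i) * (E j ⊗ₖ Y j)
      = if i = j then E i ⊗ₖ (X i * Y j) else 0 := by
    intro i j
    rw [← Matrix.mul_kronecker_mul, E_mul_E]
    split <;> simp
  simp_rw [h]
  simp

lemma h2 {n : ℕ} (X Y : Fin n → Matrix (Fin n) (Fin n) ℂ) :
    (∑ i : Fin n, X i ⊗ₖ E i) * (∑ j : Fin n, Y j ⊗ₖ E j)
      = ∑ i : Fin n, (X i * Y i) ⊗ₖ E i := by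
  rw [Finset.sum_mul_sum]
  have h : ∀ i j : Fin n, (X i ⊗ₖ E i) * (Y j ⊗ₖ E j)
      = if i = j then (X i * Y j) ⊗ₖ E i else 0 := by
    intro i j
    rw [← Matrix.mul_kronecker_mul, E_mul_E]
    split <;> simp
  simp_rw [h]
  simp

lemma ksum_right {n : ℕ} (x : Matrix (Fin n) (Fin n) ℂ) :
    ∑ i : Fin n, x ⊗ₖ E i = x ⊗ₖ (1 : Matrix (Fin n) (Fin n) ℂ) := by
  rw [← sum_E]
  ext ⟨a, c⟩ ⟨a', c'⟩
  simp [Matrix.sum_apply, Finset.mul_sum]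

/-- with `A, B, C` parametrized by `b` and the non-dynamical `R`,
and `D` the `q`-twist of `R̃`, any constant solution `Q` of `R Q₁ Q₂ = Q₂ Q₁ R̃`
yields the solution `K(λ) = b(λ)⁻¹ Q q(λ)` of the semi-dynamical reflection equation. -/
theorem stmt11 (n : ℕ) (γ : ℂ) (hγ : γ ≠ 0)
    (R Rt : Matrix (Fin n × Fin n) (Fin n × Fin n) ℂ)
    (b q : (Fin n → ℂ) → Matrix (Fin n) (Fin n) ℂ)
    (hb : ∀ l, IsUnit (b l)) (hq : ∀ l, IsUnit (q l))
    (Q : Matrix (Fin n) (Fin n) ℂ)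
    (hQ : R * (Q ⊗ₖ (1 : Matrix (Fin n) (Fin n) ℂ))
            * ((1 : Matrix (Fin n) (Fin n) ℂ) ⊗ₖ Q)
        = ((1 : Matrix (Fin n) (Fin n) ℂ) ⊗ₖ Q)
            * (Q ⊗ₖ (1 : Matrix (Fin n) (Fin n) ℂ)) * Rt) :
    ∀ l : Fin n → ℂ,
      -- A(λ) K₁(λ) B(λ) K₂(λ+h₁)
      (((b l)⁻¹ ⊗ₖ (b l)⁻¹) * R * (b l ⊗ₖ b l))
        * (((b l)⁻¹ * Q * q l) ⊗ₖ (1 : Matrix (Fin n) (Fin n) ℂ))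
        * (∑ i : Fin n, E i ⊗ₖ ((b l)⁻¹ * b (l + eps n γ i)))
        * sh2 γ (fun μ => (b μ)⁻¹ * Q * q μ) l
      = -- K₂(λ) C(λ) K₁(λ+h₂) D(λ)
      ((1 : Matrix (Fin n) (Fin n) ℂ) ⊗ₖ ((b l)⁻¹ * Q * q l))
        * (∑ i : Fin n, ((b l)⁻¹ * b (l + eps n γ i)) ⊗ₖ E i)
        * sh1 γ (fun μ => (b μ)⁻¹ * Q * q μ) l
        * ((sh1 γ (fun μ => (q μ)⁻¹) l)
            * ((1 : Matrix (Fin n) (Fin n) ℂ) ⊗ₖ (q l)⁻¹) * Rt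
            * (q l ⊗ₖ (1 : Matrix (Fin n) (Fin n) ℂ))
            * (sh2 γ q l)) := by
  intro l
  have hbd : ∀ m, IsUnit (b m).det := fun m => (Matrix.isUnit_iff_isUnit_det _).mp (hb m)
  have hqd : ∀ m, IsUnit (q m).det := fun m => (Matrix.isUnit_iff_isUnit_det _).mp (hq m)
  -- key pointwise simplification
  have key1 : ∀ i : Fin n,
      ((b l)⁻¹ * b (l + eps n γ i)) * ((b (l + eps n γ i))⁻¹ * Q * q (l + eps n γ i))
        = (b l)⁻¹ * Q * q (l + eps n γ i) := by
    intro i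
    simp only [mul_assoc]
    rw [← mul_assoc (b (l + eps n γ i)), Matrix.mul_nonsing_inv _ (hbd _), one_mul]
  -- B(λ) K₂(λ+h₁) = (1 ⊗ b⁻¹Q) S
  have hB : (∑ i : Fin n, E i ⊗ₖ ((b l)⁻¹ * b (l + eps n γ i)))
        * sh2 γ (fun μ => (b μ)⁻¹ * Q * q μ) l
      = ((1 : Matrix (Fin n) (Fin n) ℂ) ⊗ₖ ((b l)⁻¹ * Q))
        * ∑ i : Fin n, E i ⊗ₖ q (l + eps n γ i) := by
    rw [sh2, h1, Finset.mul_sum]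
    refine Finset.sum_congr rfl fun i _ => ?_
    rw [← Matrix.mul_kronecker_mul, one_mul, key1 i]
  -- C(λ) K₁(λ+h₂) sh1 q⁻¹ = b⁻¹Q ⊗ 1
  have hC : (∑ i : Fin n, ((b l)⁻¹ * b (l + eps n γ i)) ⊗ₖ E i)
        * sh1 γ (fun μ => (b μ)⁻¹ * Q * q μ) l
        * sh1 γ (fun μ => (q μ)⁻¹) l
      = ((b l)⁻¹ * Q) ⊗ₖ (1 : Matrix (Fin n) (Fin n) ℂ) := by
    rw [sh1, sh1, h2, h2]
    have : ∀ i : Fin n,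
        ((b l)⁻¹ * b (l + eps n γ i)) * ((b (l + eps n γ i))⁻¹ * Q * q (l + eps n γ i))
          * (q (l + eps n γ i))⁻¹ = (b l)⁻¹ * Q := by
      intro i
      rw [key1 i, mul_assoc, Matrix.mul_nonsing_inv _ (hqd _), mul_one]
    simp_rw [this]
    exact ksum_right _
  -- the constant-prefix identity
  have hpre :
      ((b l)⁻¹ ⊗ₖ (b l)⁻¹) * R * (b l ⊗ₖ b l)
          * (((b l)⁻¹ * Q * q l) ⊗ₖ (1 : Matrix (Fin n) (Fin n) ℂ))
          * ((1 : Matrix (Fin n) (Fin n) ℂ) ⊗ₖ ((b l)⁻¹ * Q))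
        = ((1 : Matrix (Fin n) (Fin n) ℂ) ⊗ₖ ((b l)⁻¹ * Q * q l))
          * (((b l)⁻¹ * Q) ⊗ₖ (1 : Matrix (Fin n) (Fin n) ℂ))
          * ((1 : Matrix (Fin n) (Fin n) ℂ) ⊗ₖ (q l)⁻¹) * Rt
          * (q l ⊗ₖ (1 : Matrix (Fin n) (Fin n) ℂ)) := by
    have e1 : (b l ⊗ₖ b l) * (((b l)⁻¹ * Q * q l) ⊗ₖ (1 : Matrix (Fin n) (Fin n) ℂ))
        * ((1 : Matrix (Fin n) (Fin n) ℂ) ⊗ₖ ((b l)⁻¹ * Q)) = (Q * q l) ⊗ₖ Q := by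
      rw [← Matrix.mul_kronecker_mul, ← Matrix.mul_kronecker_mul]
      simp only [mul_one, ← mul_assoc, Matrix.mul_nonsing_inv _ (hbd l), one_mul]
    have e2 : ((1 : Matrix (Fin n) (Fin n) ℂ) ⊗ₖ ((b l)⁻¹ * Q * q l))
        * (((b l)⁻¹ * Q) ⊗ₖ (1 : Matrix (Fin n) (Fin n) ℂ))
        * ((1 : Matrix (Fin n) (Fin n) ℂ) ⊗ₖ (q l)⁻¹)
        = ((b l)⁻¹ * Q) ⊗ₖ ((b l)⁻¹ * Q) := by
      rw [← Matrix.mul_kronecker_mul, ← Matrix.mul_kronecker_mul]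
      simp only [mul_one, one_mul, mul_assoc, Matrix.mul_nonsing_inv _ (hqd l)]
    have e3 : (Q * q l) ⊗ₖ Q
        = (Q ⊗ₖ (1 : Matrix (Fin n) (Fin n) ℂ)) * ((1 : Matrix (Fin n) (Fin n) ℂ) ⊗ₖ Q)
          * (q l ⊗ₖ (1 : Matrix (Fin n) (Fin n) ℂ)) := by
      rw [← Matrix.mul_kronecker_mul, ← Matrix.mul_kronecker_mul]
      simp
    have e4 : ((b l)⁻¹ * Q) ⊗ₖ ((b l)⁻¹ * Q)
        = ((b l)⁻¹ ⊗ₖ (b l)⁻¹)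
          * (((1 : Matrix (Fin n) (Fin n) ℂ) ⊗ₖ Q) * (Q ⊗ₖ (1 : Matrix (Fin n) (Fin n) ℂ))) := by
      rw [← Matrix.mul_kronecker_mul, one_mul, mul_one, ← Matrix.mul_kronecker_mul]
    have e5 : ((b l)⁻¹ ⊗ₖ (b l)⁻¹) * R * (Q ⊗ₖ (1 : Matrix (Fin n) (Fin n) ℂ))
          * ((1 : Matrix (Fin n) (Fin n) ℂ) ⊗ₖ Q)
        = ((b l)⁻¹ ⊗ₖ (b l)⁻¹) * ((1 : Matrix (Fin n) (Fin n) ℂ) ⊗ₖ Q)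
          * (Q ⊗ₖ (1 : Matrix (Fin n) (Fin n) ℂ)) * Rt := by
      calc ((b l)⁻¹ ⊗ₖ (b l)⁻¹) * R * (Q ⊗ₖ (1 : Matrix (Fin n) (Fin n) ℂ))
          * ((1 : Matrix (Fin n) (Fin n) ℂ) ⊗ₖ Q)
          = ((b l)⁻¹ ⊗ₖ (b l)⁻¹) * (R * (Q ⊗ₖ (1 : Matrix (Fin n) (Fin n) ℂ))
            * ((1 : Matrix (Fin n) (Fin n) ℂ) ⊗ₖ Q)) := by simp only [mul_assoc]
        _ = ((b l)⁻¹ ⊗ₖ (b l)⁻¹) * (((1 : Matrix (Fin n) (Fin n) ℂ) ⊗ₖ Q)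
            * (Q ⊗ₖ (1 : Matrix (Fin n) (Fin n) ℂ)) * Rt) := by rw [hQ]
        _ = _ := by simp only [mul_assoc]
    calc ((b l)⁻¹ ⊗ₖ (b l)⁻¹) * R * (b l ⊗ₖ b l)
          * (((b l)⁻¹ * Q * q l) ⊗ₖ (1 : Matrix (Fin n) (Fin n) ℂ))
          * ((1 : Matrix (Fin n) (Fin n) ℂ) ⊗ₖ ((b l)⁻¹ * Q))
        = ((b l)⁻¹ ⊗ₖ (b l)⁻¹) * R
          * ((b l ⊗ₖ b l) * (((b l)⁻¹ * Q * q l) ⊗ₖ (1 : Matrix (Fin n) (Fin n) ℂ))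
            * ((1 : Matrix (Fin n) (Fin n) ℂ) ⊗ₖ ((b l)⁻¹ * Q))) := by simp only [mul_assoc]
      _ = ((b l)⁻¹ ⊗ₖ (b l)⁻¹) * R * ((Q * q l) ⊗ₖ Q) := by rw [e1]
      _ = ((b l)⁻¹ ⊗ₖ (b l)⁻¹) * R * (Q ⊗ₖ (1 : Matrix (Fin n) (Fin n) ℂ))
          * ((1 : Matrix (Fin n) (Fin n) ℂ) ⊗ₖ Q)
          * (q l ⊗ₖ (1 : Matrix (Fin n) (Fin n) ℂ)) := by
            rw [e3]; simp only [mul_assoc]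
      _ = ((b l)⁻¹ ⊗ₖ (b l)⁻¹) * ((1 : Matrix (Fin n) (Fin n) ℂ) ⊗ₖ Q)
          * (Q ⊗ₖ (1 : Matrix (Fin n) (Fin n) ℂ)) * Rt
          * (q l ⊗ₖ (1 : Matrix (Fin n) (Fin n) ℂ)) := by rw [e5]
      _ = _ := by rw [e2, e4]; simp only [mul_assoc]
  -- put it together
  calc (((b l)⁻¹ ⊗ₖ (b l)⁻¹) * R * (b l ⊗ₖ b l))
        * (((b l)⁻¹ * Q * q l) ⊗ₖ (1 : Matrix (Fin n) (Fin n) ℂ))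
        * (∑ i : Fin n, E i ⊗ₖ ((b l)⁻¹ * b (l + eps n γ i)))
        * sh2 γ (fun μ => (b μ)⁻¹ * Q * q μ) l
      = (((b l)⁻¹ ⊗ₖ (b l)⁻¹) * R * (b l ⊗ₖ b l))
        * (((b l)⁻¹ * Q * q l) ⊗ₖ (1 : Matrix (Fin n) (Fin n) ℂ))
        * ((∑ i : Fin n, E i ⊗ₖ ((b l)⁻¹ * b (l + eps n γ i)))
          * sh2 γ (fun μ => (b μ)⁻¹ * Q * q μ) l) := by simp only [mul_assoc]
    _ = (((b l)⁻¹ ⊗ₖ (b l)⁻¹) * R * (b l ⊗ₖ b l))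
        * (((b l)⁻¹ * Q * q l) ⊗ₖ (1 : Matrix (Fin n) (Fin n) ℂ))
        * (((1 : Matrix (Fin n) (Fin n) ℂ) ⊗ₖ ((b l)⁻¹ * Q))
          * ∑ i : Fin n, E i ⊗ₖ q (l + eps n γ i)) := by rw [hB]
    _ = (((b l)⁻¹ ⊗ₖ (b l)⁻¹) * R * (b l ⊗ₖ b l)
        * (((b l)⁻¹ * Q * q l) ⊗ₖ (1 : Matrix (Fin n) (Fin n) ℂ))
        * ((1 : Matrix (Fin n) (Fin n) ℂ) ⊗ₖ ((b l)⁻¹ * Q)))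
        * ∑ i : Fin n, E i ⊗ₖ q (l + eps n γ i) := by simp only [mul_assoc]
    _ = (((1 : Matrix (Fin n) (Fin n) ℂ) ⊗ₖ ((b l)⁻¹ * Q * q l))
          * (((b l)⁻¹ * Q) ⊗ₖ (1 : Matrix (Fin n) (Fin n) ℂ))
          * ((1 : Matrix (Fin n) (Fin n) ℂ) ⊗ₖ (q l)⁻¹) * Rt
          * (q l ⊗ₖ (1 : Matrix (Fin n) (Fin n) ℂ)))
        * ∑ i : Fin n, E i ⊗ₖ q (l + eps n γ i) := by rw [hpre]
    _ = ((1 : Matrix (Fin n) (Fin n) ℂ) ⊗ₖ ((b l)⁻¹ * Q * q l))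
          * ((∑ i : Fin n, ((b l)⁻¹ * b (l + eps n γ i)) ⊗ₖ E i)
            * sh1 γ (fun μ => (b μ)⁻¹ * Q * q μ) l
            * sh1 γ (fun μ => (q μ)⁻¹) l)
          * ((1 : Matrix (Fin n) (Fin n) ℂ) ⊗ₖ (q l)⁻¹) * Rt
          * (q l ⊗ₖ (1 : Matrix (Fin n) (Fin n) ℂ))
          * ∑ i : Fin n, E i ⊗ₖ q (l + eps n γ i) := by rw [hC]
    _ = _ := by
          rw [show sh2 γ q l = ∑ i : Fin n, E i ⊗ₖ q (l + eps n γ i) from rfl]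
          simp only [mul_assoc]
end

section
/- Fix γ ≠ 0 and let V = ℂ^n. Suppose A, B, C, D : ℂ^n → End(V ⊗ V) and K : ℂ^n → End(V) satisfy the semi-dynamical reflection equation A K_1 B K_2(λ+h_1) = K_2 C K_1(λ+h_2) D. Let g ∈ GL(n,ℂ) be a diagonal matrix (so g commutes with all e_{ii}) such that [D(λ), g ⊗ g] = 0, [B(λ), g ⊗ 1] = 0, [C(λ), 1 ⊗ g] = 0, and [A(λ), g ⊗ g] = 0 for all λ. Then for every integer k, the function λ ↦ K(λ) g^k is also a solution of the same semi-dynamical reflection equation. -/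
/-!
Right multiplication by `G = gᵏ` turns `K₁` into `K₁ (G ⊗ 1)` and `K₂` into `K₂ (1 ⊗ G)`. Because
`G` is diagonal it commutes with the projectors `e_{ii}`, so the dynamical shifts behave the same
way: `(KG)₂(λ+h₁) = K₂(λ+h₁) (1 ⊗ G)` and `(KG)₁(λ+h₂) = K₁(λ+h₂) (G ⊗ 1)`. The commutation
hypotheses let these factors pass through `B`, `C` and `D`, so both sides of the equation for `KG`
are the corresponding sides for `K`, multiplied on the right by `G ⊗ G`.
-/

open Matrix Kronecker BigOperators

/-- The semi-dynamical reflection equation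
`A K₁ B K₂(λ+h₁) = K₂ C K₁(λ+h₂) D`. -/
noncomputable def SDRE {n : ℕ} (γ : ℂ)
    (A B C D : (Fin n → ℂ) → Matrix (Fin n × Fin n) (Fin n × Fin n) ℂ)
    (K : (Fin n → ℂ) → Matrix (Fin n) (Fin n) ℂ) : Prop :=
  ∀ l : Fin n → ℂ,
    A l * (K l ⊗ₖ (1 : Matrix (Fin n) (Fin n) ℂ)) * B l * sh2 γ K l
      = ((1 : Matrix (Fin n) (Fin n) ℂ) ⊗ₖ K l) * C l * sh1 γ K l * D l

namespace Matrix

variable {R m n : Type*} [Fintype m] [Fintype n]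

section CommSemiring

variable [CommSemiring R]

theorem mul_kronecker_one [DecidableEq n] (X Y : Matrix m m R) :
    (X * Y) ⊗ₖ (1 : Matrix n n R) = (X ⊗ₖ 1) * (Y ⊗ₖ 1) := by
  rw [← mul_kronecker_mul, mul_one]

theorem one_kronecker_mul [DecidableEq m] (X Y : Matrix n n R) :
    (1 : Matrix m m R) ⊗ₖ (X * Y) = (1 ⊗ₖ X) * (1 ⊗ₖ Y) := by
  rw [← mul_kronecker_mul, mul_one]

variable [DecidableEq m] [DecidableEq n]

theorem kronecker_one_mul_one_kronecker (X : Matrix m m R) (Y : Matrix n n R) :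
    (X ⊗ₖ 1) * (1 ⊗ₖ Y) = X ⊗ₖ Y := by
  rw [← mul_kronecker_mul, mul_one, one_mul]

theorem one_kronecker_mul_kronecker_one (X : Matrix m m R) (Y : Matrix n n R) :
    (1 ⊗ₖ Y) * (X ⊗ₖ 1) = X ⊗ₖ Y := by
  rw [← mul_kronecker_mul, mul_one, one_mul]

theorem kronecker_pow (X : Matrix m m R) (Y : Matrix n n R) (k : ℕ) :
    (X ⊗ₖ Y) ^ k = (X ^ k) ⊗ₖ (Y ^ k) := by
  induction k with
  | zero => simp
  | succ k ih => rw [pow_succ, pow_succ, pow_succ, ih, mul_kronecker_mul]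

end CommSemiring

theorem kronecker_zpow [CommRing R] [DecidableEq m] [DecidableEq n]
    (X : Matrix m m R) (Y : Matrix n n R) (k : ℤ) :
    (X ⊗ₖ Y) ^ k = (X ^ k) ⊗ₖ (Y ^ k) := by
  cases k with
  | ofNat k => simpa using kronecker_pow X Y k
  | negSucc k => rw [zpow_negSucc, zpow_negSucc, zpow_negSucc, kronecker_pow, inv_kronecker]

end Matrix

theorem E_commute_diagonal {n : ℕ} (i : Fin n) (d : Fin n → ℂ) :
    Commute (E i) (diagonal d) := by
  rw [E, ← diagonal_single]
  exact commute_diagonal _ _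

section Shift

variable {n : ℕ} (γ : ℂ) (X : (Fin n → ℂ) → Matrix (Fin n) (Fin n) ℂ)
  (G : Matrix (Fin n) (Fin n) ℂ) (l : Fin n → ℂ)

theorem sh1_mul_right : sh1 γ (fun l => X l * G) l = sh1 γ X l * (G ⊗ₖ 1) := by
  simp only [sh1, Finset.sum_mul, ← mul_kronecker_mul, mul_one]

theorem sh2_mul_right : sh2 γ (fun l => X l * G) l = sh2 γ X l * (1 ⊗ₖ G) := by
  simp only [sh2, Finset.sum_mul, ← mul_kronecker_mul, mul_one]

variable {G}

theorem commute_sh1 (hG : ∀ i, Commute (E i) G) : Commute (sh1 γ X l) (1 ⊗ₖ G) :=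
  Commute.sum_left _ _ _ fun i _ => by
    simp only [Commute, SemiconjBy, ← mul_kronecker_mul, one_mul, mul_one, (hG i).eq]

theorem commute_sh2 (hG : ∀ i, Commute (E i) G) : Commute (sh2 γ X l) (G ⊗ₖ 1) :=
  Commute.sum_left _ _ _ fun i _ => by
    simp only [Commute, SemiconjBy, ← mul_kronecker_mul, one_mul, mul_one, (hG i).eq]

end Shift

theorem SDRE.mul_right {n : ℕ} {γ : ℂ}
    {A B C D : (Fin n → ℂ) → Matrix (Fin n × Fin n) (Fin n × Fin n) ℂ}
    {K : (Fin n → ℂ) → Matrix (Fin n) (Fin n) ℂ} (hK : SDRE γ A B C D K)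
    {G : Matrix (Fin n) (Fin n) ℂ} (hG : ∀ i, Commute (E i) G)
    (hB : ∀ l, Commute (B l) (G ⊗ₖ 1)) (hC : ∀ l, Commute (C l) (1 ⊗ₖ G))
    (hD : ∀ l, Commute (D l) (G ⊗ₖ G)) :
    SDRE γ A B C D (fun l => K l * G) := by
  intro l
  have hL : A l * ((K l * G) ⊗ₖ 1) * B l * sh2 γ (fun l => K l * G) l
      = A l * (K l ⊗ₖ 1) * B l * sh2 γ K l * (G ⊗ₖ G) := by
    rw [sh2_mul_right, mul_kronecker_one, ← kronecker_one_mul_one_kronecker G G]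
    simp only [mul_assoc, (hB l).symm.left_comm, (commute_sh2 γ K l hG).symm.left_comm]
  have hR : (1 ⊗ₖ (K l * G)) * C l * sh1 γ (fun l => K l * G) l * D l
      = (1 ⊗ₖ K l) * C l * sh1 γ K l * D l * (G ⊗ₖ G) := by
    rw [sh1_mul_right, one_kronecker_mul, mul_assoc _ (D l), (hD l).eq,
      ← one_kronecker_mul_kronecker_one G G]
    simp only [mul_assoc, (hC l).symm.left_comm, (commute_sh1 γ K l hG).symm.left_comm]
  rw [hL, hR, hK l]

theorem stmt17_general (n : ℕ) (γ : ℂ)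
    (A B C D : (Fin n → ℂ) → Matrix (Fin n × Fin n) (Fin n × Fin n) ℂ)
    (K : (Fin n → ℂ) → Matrix (Fin n) (Fin n) ℂ)
    (hK : SDRE γ A B C D K)
    (d : Fin n → ℂ)
    (hD : ∀ l, D l * (Matrix.diagonal d ⊗ₖ Matrix.diagonal d)
        = (Matrix.diagonal d ⊗ₖ Matrix.diagonal d) * D l)
    (hB : ∀ l, B l * (Matrix.diagonal d ⊗ₖ (1 : Matrix (Fin n) (Fin n) ℂ))
        = (Matrix.diagonal d ⊗ₖ (1 : Matrix (Fin n) (Fin n) ℂ)) * B l)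
    (hC : ∀ l, C l * ((1 : Matrix (Fin n) (Fin n) ℂ) ⊗ₖ Matrix.diagonal d)
        = ((1 : Matrix (Fin n) (Fin n) ℂ) ⊗ₖ Matrix.diagonal d) * C l) :
    ∀ k : ℤ, SDRE γ A B C D (fun l => K l * (Matrix.diagonal d) ^ k) := by
  intro k
  refine hK.mul_right (fun i => Matrix.Commute.zpow_right (E_commute_diagonal i d) k)
    (fun l => ?_) (fun l => ?_) (fun l => ?_)
  · simpa only [kronecker_zpow, Matrix.one_zpow] using Matrix.Commute.zpow_right (hB l) k
  · simpa only [kronecker_zpow, Matrix.one_zpow] using Matrix.Commute.zpow_right (hC l) k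
  · simpa only [kronecker_zpow] using Matrix.Commute.zpow_right (hD l) k

/-- Proposition 6: if `K` solves the SDRE and `g` is an invertible diagonal
matrix with `[D, g⊗g] = [B, g⊗1] = [C, 1⊗g] = [A, g⊗g] = 0`, then `λ ↦ K(λ) gᵏ` is also
a solution, for every integer `k`. -/
theorem stmt17 (n : ℕ) (γ : ℂ) (hγ : γ ≠ 0)
    (A B C D : (Fin n → ℂ) → Matrix (Fin n × Fin n) (Fin n × Fin n) ℂ)
    (K : (Fin n → ℂ) → Matrix (Fin n) (Fin n) ℂ)
    (hK : SDRE γ A B C D K)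
    (d : Fin n → ℂ) (hd : IsUnit (Matrix.diagonal d))
    (hD : ∀ l, D l * (Matrix.diagonal d ⊗ₖ Matrix.diagonal d)
        = (Matrix.diagonal d ⊗ₖ Matrix.diagonal d) * D l)
    (hB : ∀ l, B l * (Matrix.diagonal d ⊗ₖ (1 : Matrix (Fin n) (Fin n) ℂ))
        = (Matrix.diagonal d ⊗ₖ (1 : Matrix (Fin n) (Fin n) ℂ)) * B l)
    (hC : ∀ l, C l * ((1 : Matrix (Fin n) (Fin n) ℂ) ⊗ₖ Matrix.diagonal d)
        = ((1 : Matrix (Fin n) (Fin n) ℂ) ⊗ₖ Matrix.diagonal d) * C l)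
    (hA : ∀ l, A l * (Matrix.diagonal d ⊗ₖ Matrix.diagonal d)
        = (Matrix.diagonal d ⊗ₖ Matrix.diagonal d) * A l) :
    ∀ k : ℤ, SDRE γ A B C D (fun l => K l * (Matrix.diagonal d) ^ k) :=
  stmt17_general n γ A B C D K hK d hD hB hC
end

section
/- Fix γ ≠ 0, V = ℂ^n, and suppose D(λ) = Σ_{i,j} d_{ij}(λ) e_{ii} ⊗ e_{jj} + Σ_{i≠j} Δ_{ij}(λ) e_{ij} ⊗ e_{ji} (zero-weight form) and B(λ) = Σ_i e_{ii} ⊗ b_i(λ). Then the Yang–Baxter-type consistency equation D_{12}(λ) B_{13}(λ) B_{23}(λ+h_1) = B_{23}(λ) B_{13}(λ+h_2) D_{12}(λ) on (ℂ^n)^{⊗3} holds if and only if d_{ij}(λ) · (b_i(λ) b_j(λ+γε_i) − b_j(λ) b_i(λ+γε_j)) = 0 for all i, j ∈ {1,…,n} and all λ. In particular, if d_{ij}(λ) ≠ 0 for all i, j, λ, the equation is equivalent to b_i(λ) b_j(λ+γε_i) = b_j(λ) b_i(λ+γε_j) for all i, j, λ. -/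
open Matrix Kronecker BigOperators

/-- Embedding of a two-space matrix into legs 1,2 of `(ℂⁿ)^{⊗3}`. -/
def L12 {n : ℕ} (X : Matrix (Fin n × Fin n) (Fin n × Fin n) ℂ) :
    Matrix (Fin n × Fin n × Fin n) (Fin n × Fin n × Fin n) ℂ :=
  Matrix.of fun p q => X (p.1, p.2.1) (q.1, q.2.1) * (if p.2.2 = q.2.2 then 1 else 0)

/-- Embedding of a two-space matrix into legs 1,3 of `(ℂⁿ)^{⊗3}`. -/
def L13 {n : ℕ} (X : Matrix (Fin n × Fin n) (Fin n × Fin n) ℂ) :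
    Matrix (Fin n × Fin n × Fin n) (Fin n × Fin n × Fin n) ℂ :=
  Matrix.of fun p q => X (p.1, p.2.2) (q.1, q.2.2) * (if p.2.1 = q.2.1 then 1 else 0)

/-- Embedding of a two-space matrix into legs 2,3 of `(ℂⁿ)^{⊗3}`. -/
def L23 {n : ℕ} (X : Matrix (Fin n × Fin n) (Fin n × Fin n) ℂ) :
    Matrix (Fin n × Fin n × Fin n) (Fin n × Fin n × Fin n) ℂ :=
  Matrix.of fun p q => X (p.2.1, p.2.2) (q.2.1, q.2.2) * (if p.1 = q.1 then 1 else 0)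

/-- `X₁₂(λ+h₃)` : legs 1,2 with dynamical shift coupled to the diagonal of leg 3. -/
def sh12at3 {n : ℕ} (γ : ℂ)
    (X : (Fin n → ℂ) → Matrix (Fin n × Fin n) (Fin n × Fin n) ℂ) (l : Fin n → ℂ) :
    Matrix (Fin n × Fin n × Fin n) (Fin n × Fin n × Fin n) ℂ :=
  Matrix.of fun p q =>
    X (l + eps n γ p.2.2) (p.1, p.2.1) (q.1, q.2.1) * (if p.2.2 = q.2.2 then 1 else 0)

/-- `X₁₃(λ+h₂)` : legs 1,3 with dynamical shift coupled to the diagonal of leg 2. -/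
def sh13at2 {n : ℕ} (γ : ℂ)
    (X : (Fin n → ℂ) → Matrix (Fin n × Fin n) (Fin n × Fin n) ℂ) (l : Fin n → ℂ) :
    Matrix (Fin n × Fin n × Fin n) (Fin n × Fin n × Fin n) ℂ :=
  Matrix.of fun p q =>
    X (l + eps n γ p.2.1) (p.1, p.2.2) (q.1, q.2.2) * (if p.2.1 = q.2.1 then 1 else 0)

/-- `X₂₃(λ+h₁)` : legs 2,3 with dynamical shift coupled to the diagonal of leg 1. -/
def sh23at1 {n : ℕ} (γ : ℂ)
    (X : (Fin n → ℂ) → Matrix (Fin n × Fin n) (Fin n × Fin n) ℂ) (l : Fin n → ℂ) :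
    Matrix (Fin n × Fin n × Fin n) (Fin n × Fin n × Fin n) ℂ :=
  Matrix.of fun p q =>
    X (l + eps n γ p.1) (p.2.1, p.2.2) (q.2.1, q.2.2) * (if p.1 = q.1 then 1 else 0)


/-- `e_{ij}` matrix unit. -/
def Eu {n : ℕ} (i j : Fin n) : Matrix (Fin n) (Fin n) ℂ := Matrix.single i j 1

/-!
Entrywise, both sides of the consistency equation at `((p₁,p₂,p₃),(q₁,q₂,q₃))` factor as an entry
`D (p₁,p₂) (q₁,q₂)` times the `(p₃,q₃)` entry of `b_{q₁}(λ) b_{q₂}(λ+γε_{q₁})` (left) or of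
`b_{p₂}(λ) b_{p₁}(λ+γε_{p₂})` (right). A zero-weight `D` is supported on `q = p` and on the swap
`q = (p₂,p₁)`. On the swap both sides are the same `Δ`-multiple of `b_{p₂}(λ) b_{p₁}(λ+γε_{p₂})`,
so only the diagonal entries constrain `b`, and they give exactly the `d_{ij}` condition.
-/

section ZeroWeight

variable {n : ℕ}

def diagKron (M : Fin n → Matrix (Fin n) (Fin n) ℂ) : Matrix (Fin n × Fin n) (Fin n × Fin n) ℂ :=
  ∑ i : Fin n, Eu i i ⊗ₖ M i

def zeroWeight (d Δ : Fin n → Fin n → ℂ) : Matrix (Fin n × Fin n) (Fin n × Fin n) ℂ :=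
  (∑ i : Fin n, ∑ j : Fin n, d i j • (Eu i i ⊗ₖ Eu j j))
    + ∑ i : Fin n, ∑ j : Fin n, (if i ≠ j then Δ i j • (Eu i j ⊗ₖ Eu j i) else 0)

lemma diagKron_apply (M : Fin n → Matrix (Fin n) (Fin n) ℂ) (a c a' c' : Fin n) :
    diagKron M (a, c) (a', c') = if a = a' then M a c c' else 0 := by
  simp [diagKron, Matrix.sum_apply, Eu, Matrix.single, ite_and]

lemma zeroWeight_apply (d Δ : Fin n → Fin n → ℂ) (a c a' c' : Fin n) :
    zeroWeight d Δ (a, c) (a', c')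
      = (if a = a' ∧ c = c' then d a c else 0)
        + (if a ≠ c ∧ a' = c ∧ c' = a then Δ a c else 0) := by
  simp only [zeroWeight, Eu, Matrix.single_kronecker_single, Matrix.add_apply, Matrix.sum_apply,
    Matrix.smul_apply, Matrix.single_apply, Prod.mk.injEq, smul_eq_mul, mul_one]
  congr 1
  · simp [ite_and, Finset.sum_ite_eq, eq_comm]
  · simp only [apply_ite (fun M : Matrix _ _ ℂ => M (a, c) (a', c')), Matrix.zero_apply,
      Matrix.smul_apply, Matrix.single_apply, Prod.mk.injEq, smul_eq_mul, ite_and]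
    rw [Fintype.sum_eq_single a fun i hi => by simp [hi],
      Fintype.sum_eq_single c fun j hj => by simp [hj]]
    by_cases hac : a = c <;> simp [hac, eq_comm]

lemma zeroWeight_intertwines_iff (d Δ : Fin n → Fin n → ℂ)
    (X : Fin n → Fin n → Matrix (Fin n) (Fin n) ℂ) :
    (∀ p₁ p₂ p₃ q₁ q₂ q₃ : Fin n, zeroWeight d Δ (p₁, p₂) (q₁, q₂) * X q₁ q₂ p₃ q₃
        = X p₂ p₁ p₃ q₃ * zeroWeight d Δ (p₁, p₂) (q₁, q₂)) ↔
      ∀ i j, d i j • (X i j - X j i) = 0 := by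
  have hsmul : ∀ i j, d i j • (X i j - X j i) = 0 ↔
      ∀ p₃ q₃, d i j * X i j p₃ q₃ = X j i p₃ q₃ * d i j := fun i j => by
    simp only [← Matrix.ext_iff, Matrix.smul_apply, Matrix.sub_apply, Matrix.zero_apply,
      smul_eq_mul, mul_sub, sub_eq_zero]
    simp only [mul_comm (d i j)]
  have not_swap_diag : ∀ i j : Fin n, ¬(i ≠ j ∧ i = j ∧ j = i) := fun i j h => h.1 h.2.1
  simp only [hsmul, zeroWeight_apply]
  constructor
  · intro h i j p₃ q₃
    simpa [not_swap_diag] using h i j p₃ i j q₃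
  · intro h p₁ p₂ p₃ q₁ q₂ q₃
    by_cases hp : p₁ = q₁ ∧ p₂ = q₂
    · obtain ⟨rfl, rfl⟩ := hp
      simpa [not_swap_diag] using h p₁ p₂ p₃ q₃
    · by_cases hswap : p₁ ≠ p₂ ∧ q₁ = p₂ ∧ q₂ = p₁
      · obtain ⟨-, rfl, rfl⟩ := hswap
        simp [hp, mul_comm]
      · simp [hp, hswap]

end ZeroWeight

section Consistency

variable {n : ℕ} (γ : ℂ) (b : (Fin n → ℂ) → Fin n → Matrix (Fin n) (Fin n) ℂ)

lemma L12_mul_L13_mul_sh23at1_apply (M : Matrix (Fin n × Fin n) (Fin n × Fin n) ℂ)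
    (l : Fin n → ℂ) (p₁ p₂ p₃ q₁ q₂ q₃ : Fin n) :
    (L12 M * L13 (diagKron (b l)) * sh23at1 γ (fun l => diagKron (b l)) l)
        (p₁, p₂, p₃) (q₁, q₂, q₃)
      = M (p₁, p₂) (q₁, q₂) * (b l q₁ * b (l + eps n γ q₁) q₂) p₃ q₃ := by
  simp only [Matrix.mul_apply, L12, L13, sh23at1, Matrix.of_apply, diagKron_apply,
    Fintype.sum_prod_type]
  simp [mul_ite, ite_mul, Finset.mul_sum, mul_assoc, mul_comm, mul_left_comm]

lemma L23_mul_sh13at2_mul_L12_apply (M : Matrix (Fin n × Fin n) (Fin n × Fin n) ℂ)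
    (l : Fin n → ℂ) (p₁ p₂ p₃ q₁ q₂ q₃ : Fin n) :
    (L23 (diagKron (b l)) * sh13at2 γ (fun l => diagKron (b l)) l * L12 M)
        (p₁, p₂, p₃) (q₁, q₂, q₃)
      = (b l p₂ * b (l + eps n γ p₂) p₁) p₃ q₃ * M (p₁, p₂) (q₁, q₂) := by
  simp only [Matrix.mul_apply, L23, L12, sh13at2, Matrix.of_apply, diagKron_apply,
    Fintype.sum_prod_type]
  simp [mul_ite, ite_mul, Finset.mul_sum, mul_comm, mul_left_comm]

lemma consistency_iff (d Δ : Fin n → Fin n → ℂ) (l : Fin n → ℂ) :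
    L12 (zeroWeight d Δ) * L13 (diagKron (b l)) * sh23at1 γ (fun l => diagKron (b l)) l
        = L23 (diagKron (b l)) * sh13at2 γ (fun l => diagKron (b l)) l * L12 (zeroWeight d Δ) ↔
      ∀ i j, d i j • (b l i * b (l + eps n γ i) j - b l j * b (l + eps n γ j) i) = 0 := by
  rw [← Matrix.ext_iff]
  simp only [Prod.forall, L12_mul_L13_mul_sh23at1_apply, L23_mul_sh13at2_mul_L12_apply]
  exact zeroWeight_intertwines_iff d Δ fun i j => b l i * b (l + eps n γ i) j

end Consistency

theorem stmt19_general (n : ℕ) (γ : ℂ)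
    (d Δ : (Fin n → ℂ) → Fin n → Fin n → ℂ)
    (b : (Fin n → ℂ) → Fin n → Matrix (Fin n) (Fin n) ℂ)
    (D : (Fin n → ℂ) → Matrix (Fin n × Fin n) (Fin n × Fin n) ℂ)
    (hD : ∀ l, D l = (∑ i : Fin n, ∑ j : Fin n, d l i j • (Eu i i ⊗ₖ Eu j j))
        + ∑ i : Fin n, ∑ j : Fin n, (if i ≠ j then Δ l i j • (Eu i j ⊗ₖ Eu j i) else 0))
    (B : (Fin n → ℂ) → Matrix (Fin n × Fin n) (Fin n × Fin n) ℂ)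
    (hB : ∀ l, B l = ∑ i : Fin n, Eu i i ⊗ₖ b l i) :
    ((∀ l, L12 (D l) * L13 (B l) * sh23at1 γ B l
        = L23 (B l) * sh13at2 γ B l * L12 (D l)) ↔
      (∀ (i j : Fin n) (l : Fin n → ℂ),
        d l i j • (b l i * b (l + eps n γ i) j - b l j * b (l + eps n γ j) i) = 0)) ∧
    ((∀ (i j : Fin n) (l : Fin n → ℂ), d l i j ≠ 0) →
      ((∀ l, L12 (D l) * L13 (B l) * sh23at1 γ B l
          = L23 (B l) * sh13at2 γ B l * L12 (D l)) ↔
        (∀ (i j : Fin n) (l : Fin n → ℂ),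
          b l i * b (l + eps n γ i) j = b l j * b (l + eps n γ j) i))) := by
  obtain rfl : D = fun l => zeroWeight (d l) (Δ l) := funext hD
  obtain rfl : B = fun l => diagKron (b l) := funext hB
  have main := (forall_congr' fun l => consistency_iff γ b (d l) (Δ l) l).trans
    ⟨fun h i j l => h l i j, fun h l i j => h i j l⟩
  refine ⟨main, fun hd => main.trans ?_⟩
  simp only [smul_eq_zero, hd, false_or, sub_eq_zero]

/-- for zero-weight `D = ∑ d_{ij} e_{ii}⊗e_{jj} + ∑_{i≠j} Δ_{ij} e_{ij}⊗e_{ji}`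
and `B = ∑ e_{ii} ⊗ b_i`, the consistency equation
`D₁₂ B₁₃ B₂₃(λ+h₁) = B₂₃ B₁₃(λ+h₂) D₁₂` holds iff
`d_{ij}(λ)·(b_i(λ)b_j(λ+γεᵢ) − b_j(λ)b_i(λ+γεⱼ)) = 0` for all `i, j, λ`; in particular,
if all `d_{ij}(λ) ≠ 0` it is equivalent to `b_i(λ)b_j(λ+γεᵢ) = b_j(λ)b_i(λ+γεⱼ)`. -/
theorem stmt19 (n : ℕ) (γ : ℂ) (hγ : γ ≠ 0)
    (d Δ : (Fin n → ℂ) → Fin n → Fin n → ℂ)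
    (b : (Fin n → ℂ) → Fin n → Matrix (Fin n) (Fin n) ℂ)
    (D : (Fin n → ℂ) → Matrix (Fin n × Fin n) (Fin n × Fin n) ℂ)
    (hD : ∀ l, D l = (∑ i : Fin n, ∑ j : Fin n, d l i j • (Eu i i ⊗ₖ Eu j j))
        + ∑ i : Fin n, ∑ j : Fin n, (if i ≠ j then Δ l i j • (Eu i j ⊗ₖ Eu j i) else 0))
    (B : (Fin n → ℂ) → Matrix (Fin n × Fin n) (Fin n × Fin n) ℂ)
    (hB : ∀ l, B l = ∑ i : Fin n, Eu i i ⊗ₖ b l i) :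
    ((∀ l, L12 (D l) * L13 (B l) * sh23at1 γ B l
        = L23 (B l) * sh13at2 γ B l * L12 (D l)) ↔
      (∀ (i j : Fin n) (l : Fin n → ℂ),
        d l i j • (b l i * b (l + eps n γ i) j - b l j * b (l + eps n γ j) i) = 0)) ∧
    ((∀ (i j : Fin n) (l : Fin n → ℂ), d l i j ≠ 0) →
      ((∀ l, L12 (D l) * L13 (B l) * sh23at1 γ B l
          = L23 (B l) * sh13at2 γ B l * L12 (D l)) ↔
        (∀ (i j : Fin n) (l : Fin n → ℂ),
          b l i * b (l + eps n γ i) j = b l j * b (l + eps n γ j) i))) :=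
  stmt19_general n γ d Δ b D hD B hB
end
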